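/- For every n ≥ 0, the family δ_n of λυ-terms defined by δ_1 = 0[⇑(↑)] and δ_{m+1} = 0[δ_m/] satisfies δ_n ↓_n, i.e., δ_n reaches its ψ-normal form in exactly n normal-order ψ-reduction steps. -/

import Mathlib

mutual
/-- λυ-terms in de Bruijn notation, with explicit closures. -/
inductive LTerm : Type
  | idx : Nat → LTerm
  | lam : LTerm → LTerm
  | app : LTerm → LTerm → LTerm
  | clos : LTerm → LSub → LTerm
  deriving DecidableEq

/-- explicit λυ-substitutions. -/
inductive LSub : Type
  | slash : LTerm → LSub
  | lift : LSub → LSub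
  | shift : LSub
  deriving DecidableEq
end

mutual
/-- natural size of a λυ-term: the number of constructors (|idx n| = n+1). -/
def LTerm.size : LTerm → Nat
  | .idx n => n + 1
  | .lam a => 1 + a.size
  | .app a b => 1 + a.size + b.size
  | .clos a s => 1 + a.size + s.size

/-- natural size of a substitution. -/
def LSub.size : LSub → Nat
  | .slash a => 1 + a.size
  | .lift s => 1 + s.size
  | .shift => 1
end

/-- a λυ-term is pure if it contains no closure; pure terms are exactly the ψ-normal forms. -/
def LTerm.IsPure : LTerm → Prop
  | .idx _ => True
  | .lam a => a.IsPure
  | .app a b => a.IsPure ∧ b.IsPure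
  | .clos _ _ => False

/-- one normal-order (leftmost-outermost) ψ-reduction step. -/
inductive NStep : LTerm → LTerm → Prop
  /-- (App) (ab)[s] → a[s](b[s]) -/
  | appS (a b : LTerm) (s : LSub) :
      NStep (.clos (.app a b) s) (.app (.clos a s) (.clos b s))
  /-- (Lambda) (λa)[s] → λ(a[⇑(s)]) -/
  | lamS (a : LTerm) (s : LSub) :
      NStep (.clos (.lam a) s) (.lam (.clos a (.lift s)))
  /-- (FVar) 0[a/] → a -/
  | fvar (a : LTerm) : NStep (.clos (.idx 0) (.slash a)) a
  /-- (RVar) (S n)[a/] → n -/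
  | rvar (n : Nat) (a : LTerm) : NStep (.clos (.idx (n+1)) (.slash a)) (.idx n)
  /-- (FVarLift) 0[⇑(s)] → 0 -/
  | fvarLift (s : LSub) : NStep (.clos (.idx 0) (.lift s)) (.idx 0)
  /-- (RVarLift) (S n)[⇑(s)] → n[s][↑] -/
  | rvarLift (n : Nat) (s : LSub) :
      NStep (.clos (.idx (n+1)) (.lift s)) (.clos (.clos (.idx n) s) .shift)
  /-- (VarShift) n[↑] → S n -/
  | varShift (n : Nat) : NStep (.clos (.idx n) .shift) (.idx (n+1))
  /-- reduce under an abstraction -/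
  | lamCong {a a' : LTerm} : NStep a a' → NStep (.lam a) (.lam a')
  /-- reduce in the left part of an application -/
  | appLeft {a a' : LTerm} (b : LTerm) : NStep a a' → NStep (.app a b) (.app a' b)
  /-- reduce in the right part of an application, provided the left part is normal -/
  | appRight {b b' : LTerm} (a : LTerm) :
      a.IsPure → NStep b b' → NStep (.app a b) (.app a b')
  /-- reduce in the body of a closure, provided the closure is not itself a ψ-redex,
      i.e. its body is again a closure -/
  | closCong {t t' : LTerm} (s : LSub) :
      (∃ u v, t = LTerm.clos u v) → NStep t t' → NStep (.clos t s) (.clos t' s)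

/-- `NormIn t k` : `t` reaches its ψ-normal form in exactly `k` normal-order
ψ-reduction steps (written t ↓_k). -/
inductive NormIn : LTerm → Nat → Prop
  | base {t : LTerm} : t.IsPure → NormIn t 0
  | step {t t' : LTerm} {k : Nat} : NStep t t' → NormIn t' k → NormIn t (k+1)

/-- the family δ of λυ-terms: δ_1 = 0[⇑(↑)] and δ_{m+1} = 0[δ_m /]
(the value at 0 is irrelevant). -/
def delta : Nat → LTerm
  | 0 => .idx 0
  | 1 => .clos (.idx 0) (.lift .shift)
  | (m+2) => .clos (.idx 0) (.slash (delta (m+1)))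

/-- For every n ≥ 1, the term δ_n ψ-normalises in exactly n normal-order
ψ-reduction steps, i.e. δ_n ↓_n. -/
theorem delta_normalises_in_n (n : Nat) (hn : 1 ≤ n) : NormIn (delta n) n :=
  match n, hn with
  | 1, _ => .step (.fvarLift _) (.base trivial)
  | m + 2, _ => .step (.fvar _) (delta_normalises_in_n (m + 1) (Nat.le_add_left 1 m))
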